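/- Suppose (x, X, y, Y₁₂, α) lacks only (P4a) and α₁ > 0. Then y₁ − Y₁₂ > 0, and the point (x̄, X̄, y, Y₁₂, ᾱ) also lacks only (P4a), where x̄ := (x₁ − α₁, x₂), X̄ := [[X₁₁ − α₁²/(y₁−Y₁₂), X₁₂], [X₁₂, X₂₂]], and ᾱ := (0, α₂). -/

import Mathlib

/-!
With the pivot y₁ − Y₁₂ > 0, a Schur complement turns (P4a) into positive semidefiniteness of
the (P3) matrix with its middle diagonal entry replaced by X₁₁ − α₁²/(y₁ − Y₁₂), and (P5) into
that of the (P4b) matrix with the same entry replaced. Both complements are invariant under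
(x₁, X₁₁, α₁) ↦ (x₁ − α₁, X₁₁ − α₁²/(y₁ − Y₁₂), 0), so (P4a) and (P5) hold at the new point
exactly when they hold at the old one, while (P3) and (P4b) only involve x₁ − α₁. The only
nontrivial new linear condition X̄₁₁ ≤ x̄₁ comes from ¬(P4a): otherwise the 3 × 3 complement
would be the (P3) matrix plus a nonnegative diagonal matrix.
-/

open Matrix

set_option linter.unusedVariables false

/-- Linear conditions (L). -/
def Lcond (x1 x2 X11 X12 X22 y1 y2 Y12 a1 a2 : ℝ) : Prop :=
  X11 ≤ x1 ∧ x1 ≤ y1 ∧ X22 ≤ x2 ∧ x2 ≤ y2 ∧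
  max 0 (x1 - a1 + x2 - a2 - Y12) ≤ X12 ∧ X12 ≤ min (x1 - a1) (x2 - a2) ∧
  0 ≤ a1 ∧ a1 ≤ y1 - Y12 ∧ 0 ≤ a2 ∧ a2 ≤ y2 - Y12 ∧
  max 0 (y1 + y2 - 1) ≤ Y12 ∧ Y12 ≤ min y1 y2

/-- PSD condition (P3). -/
def P3cond (x1 x2 X11 X12 X22 y1 y2 Y12 a1 a2 : ℝ) : Prop :=
  (!![Y12, x1 - a1, x2 - a2;
      x1 - a1, x1 - a1, X12;
      x2 - a2, X12, x2 - a2] : Matrix (Fin 3) (Fin 3) ℝ).PosSemidef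

/-- PSD condition (P4a). -/
def P4acond (x1 x2 X11 X12 X22 y1 y2 Y12 a1 a2 : ℝ) : Prop :=
  (!![y1 - Y12, 0, a1, 0;
      0, Y12, x1 - a1, x2 - a2;
      a1, x1 - a1, X11, X12;
      0, x2 - a2, X12, x2 - a2] : Matrix (Fin 4) (Fin 4) ℝ).PosSemidef

/-- PSD condition (P4b). -/
def P4bcond (x1 x2 X11 X12 X22 y1 y2 Y12 a1 a2 : ℝ) : Prop :=
  (!![y2 - Y12, 0, 0, a2;
      0, Y12, x1 - a1, x2 - a2;
      0, x1 - a1, x1 - a1, X12;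
      a2, x2 - a2, X12, X22] : Matrix (Fin 4) (Fin 4) ℝ).PosSemidef

/-- PSD condition (P5). -/
def P5cond (x1 x2 X11 X12 X22 y1 y2 Y12 a1 a2 : ℝ) : Prop :=
  (!![y1 - Y12, 0, 0, a1, 0;
      0, y2 - Y12, 0, 0, a2;
      0, 0, Y12, x1 - a1, x2 - a2;
      a1, 0, x1 - a1, X11, X12;
      0, a2, x2 - a2, X12, X22] : Matrix (Fin 5) (Fin 5) ℝ).PosSemidef

/-- (x, X, y, Y₁₂, α) lacks only (P4a): it satisfies (L), (P3), (P4b), (P5)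
but violates (P4a). -/
def LacksOnlyP4a (x1 x2 X11 X12 X22 y1 y2 Y12 a1 a2 : ℝ) : Prop :=
  Lcond x1 x2 X11 X12 X22 y1 y2 Y12 a1 a2 ∧
  P3cond x1 x2 X11 X12 X22 y1 y2 Y12 a1 a2 ∧
  P4bcond x1 x2 X11 X12 X22 y1 y2 Y12 a1 a2 ∧
  P5cond x1 x2 X11 X12 X22 y1 y2 Y12 a1 a2 ∧
  ¬ P4acond x1 x2 X11 X12 X22 y1 y2 Y12 a1 a2

theorem Matrix.posSemidef_iff_schur_pivot {K : Type*} [Field K] [PartialOrder K] [StarRing K]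
    [StarOrderedRing K] {n : ℕ} {M : Matrix (Fin (n + 1)) (Fin (n + 1)) K} (hM : M.IsHermitian)
    (h0 : 0 < M 0 0) :
    M.PosSemidef ↔
      (M.submatrix Fin.succ Fin.succ -
        (M 0 0)⁻¹ • vecMulVec (fun i : Fin n => M i.succ 0) fun j : Fin n => M 0 j.succ).PosSemidef := by
  let e : Fin (n + 1) ≃ Fin n ⊕ Unit :=
    (finSuccEquiv n).trans (Equiv.optionEquivSumPUnit (Fin n))
  let D : Matrix Unit Unit K := diagonal fun _ => M 0 0
  have hD : D.PosDef := posDef_diagonal_iff.mpr fun _ => h0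
  have : Invertible D := invertibleOfIsUnitDet D (by simp [D, h0.ne'])
  have hDinv : D⁻¹ = diagonal fun _ => (M 0 0)⁻¹ :=
    inv_eq_left_inv (by simp [D, h0.ne'])
  have hblocks : M.submatrix e.symm e.symm =
      fromBlocks (M.submatrix Fin.succ Fin.succ) (of fun i _ => M i.succ 0)
        (of fun i _ => M i.succ 0)ᴴ D := by
    ext (i | _) (j | _) <;> simp [e, D, hM.apply]
  rw [← posSemidef_submatrix_equiv e.symm, hblocks, PosDef.fromBlocks₂₂ _ _ hD, hDinv]
  congr! 2
  ext i j
  simp [vecMulVec, mul_apply, hM.apply]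
  ring

section
variable {x1 x2 X11 X12 X22 y1 y2 Y12 a1 a2 : ℝ}

theorem p4acond_iff_schur (hc : 0 < y1 - Y12) :
    P4acond x1 x2 X11 X12 X22 y1 y2 Y12 a1 a2 ↔
      (!![Y12, x1 - a1, x2 - a2;
          x1 - a1, X11 - a1 ^ 2 / (y1 - Y12), X12;
          x2 - a2, X12, x2 - a2] : Matrix (Fin 3) (Fin 3) ℝ).PosSemidef := by
  rw [P4acond, posSemidef_iff_schur_pivot
    (by ext i j; fin_cases i <;> fin_cases j <;> simp) (by simpa using hc)]
  congr! 1
  ext i j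
  fin_cases i <;> fin_cases j <;> simp [vecMulVec, sq, div_eq_inv_mul]

theorem p5cond_iff_schur (hc : 0 < y1 - Y12) :
    P5cond x1 x2 X11 X12 X22 y1 y2 Y12 a1 a2 ↔
      (!![y2 - Y12, 0, 0, a2;
          0, Y12, x1 - a1, x2 - a2;
          0, x1 - a1, X11 - a1 ^ 2 / (y1 - Y12), X12;
          a2, x2 - a2, X12, X22] : Matrix (Fin 4) (Fin 4) ℝ).PosSemidef := by
  rw [P5cond, posSemidef_iff_schur_pivot
    (by ext i j; fin_cases i <;> fin_cases j <;> simp) (by simpa using hc)]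
  congr! 1
  ext i j
  fin_cases i <;> fin_cases j <;> simp [vecMulVec, sq, div_eq_inv_mul]

theorem p4acond_shift_iff (hc : 0 < y1 - Y12) :
    P4acond (x1 - a1) x2 (X11 - a1 ^ 2 / (y1 - Y12)) X12 X22 y1 y2 Y12 0 a2 ↔
      P4acond x1 x2 X11 X12 X22 y1 y2 Y12 a1 a2 := by
  simp [p4acond_iff_schur hc]

theorem p5cond_shift_iff (hc : 0 < y1 - Y12) :
    P5cond (x1 - a1) x2 (X11 - a1 ^ 2 / (y1 - Y12)) X12 X22 y1 y2 Y12 0 a2 ↔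
      P5cond x1 x2 X11 X12 X22 y1 y2 Y12 a1 a2 := by
  simp [p5cond_iff_schur hc]

theorem p4acond_of_p3cond (hc : 0 < y1 - Y12) (hP3 : P3cond x1 x2 X11 X12 X22 y1 y2 Y12 a1 a2)
    (hX : x1 - a1 ≤ X11 - a1 ^ 2 / (y1 - Y12)) :
    P4acond x1 x2 X11 X12 X22 y1 y2 Y12 a1 a2 := by
  rw [p4acond_iff_schur hc]
  convert hP3.add (PosSemidef.diagonal (d := ![0, X11 - a1 ^ 2 / (y1 - Y12) - (x1 - a1), 0]) ?_)
    using 1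
  · ext i j
    fin_cases i <;> fin_cases j <;> simp
  · intro i
    fin_cases i <;> simp [hX]

theorem lcond_shift (hL : Lcond x1 x2 X11 X12 X22 y1 y2 Y12 a1 a2)
    (hX : X11 - a1 ^ 2 / (y1 - Y12) ≤ x1 - a1) :
    Lcond (x1 - a1) x2 (X11 - a1 ^ 2 / (y1 - Y12)) X12 X22 y1 y2 Y12 0 a2 := by
  obtain ⟨-, hxy, hX22, hx2, hX12l, hX12u, ha1, ha1y, ha2, ha2y, hY⟩ := hL
  refine ⟨hX, by linarith, hX22, hx2, by simpa using hX12l, by simpa using hX12u, le_rfl,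
    ha1.trans ha1y, ha2, ha2y, hY⟩

end

theorem stmt7 (x1 x2 X11 X12 X22 y1 y2 Y12 a1 a2 : ℝ)
    (h : LacksOnlyP4a x1 x2 X11 X12 X22 y1 y2 Y12 a1 a2) (ha : 0 < a1) :
    0 < y1 - Y12 ∧
      LacksOnlyP4a (x1 - a1) x2 (X11 - a1 ^ 2 / (y1 - Y12)) X12 X22 y1 y2 Y12 0 a2 := by
  obtain ⟨hL, hP3, hP4b, hP5, hnP4a⟩ := h
  have hc : 0 < y1 - Y12 := by
    obtain ⟨-, -, -, -, -, -, -, ha1, -⟩ := hL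
    linarith
  have hX : X11 - a1 ^ 2 / (y1 - Y12) ≤ x1 - a1 :=
    le_of_not_ge fun hX => hnP4a (p4acond_of_p3cond hc hP3 hX)
  refine ⟨hc, lcond_shift hL hX, ?_, ?_, (p5cond_shift_iff hc).2 hP5,
    fun hP4a => hnP4a ((p4acond_shift_iff hc).1 hP4a)⟩
  · simpa [P3cond] using hP3
  · simpa [P4bcond] using hP4b
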